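/- Let k ≥ 3 be an integer and suppose ℓ is a positive integer with 2^{k−1} < 3^ℓ < 2^k. Let (A_i)_{i=1}^{∞} be a strictly increasing sequence of positive integers with A_1 = 1 such that G = ⋃_{i=1}^{∞} (1/A_{2i}, 1/A_{2i−1}] is a k-good set and Bad(G) = ⋃_{i=1}^{∞} (1/A_{2i+1}, 1/A_{2i}]. Then 2 ≤ ℓ ≤ k−2 and A_4 = 2^k · 3^{k−1−ℓ}. -/

import Mathlib

/-- A set `G` of reals is `k`-good if it contains no geometric progression of
length `k` with integer ratio. -/
def kGood (k : ℕ) (G : Set ℝ) : Prop :=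
  ¬ ∃ (a : ℝ) (r : ℕ), 0 < a ∧ 2 ≤ r ∧ ∀ j < k, a * (r : ℝ) ^ j ∈ G

/-- `x` is `k`-bad with respect to `G` if there is an integer `r ≥ 2` with
`x * r ^ j ∈ G` for all `j ∈ {1,...,k-1}`. -/
def kBadWrt (k : ℕ) (G : Set ℝ) (x : ℝ) : Prop :=
  ∃ r : ℕ, 2 ≤ r ∧ ∀ j : ℕ, 1 ≤ j → j ≤ k - 1 → x * (r : ℝ) ^ j ∈ G

/-- `Bad k G` is the set of `x ∈ (0,1] \ G` that are `k`-bad with respect to `G`. -/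
def Bad (k : ℕ) (G : Set ℝ) : Set ℝ :=
  {x | x ∈ Set.Ioc (0 : ℝ) 1 \ G ∧ kBadWrt k G x}

/-!
Each of `A 1`, `A 2`, `A 3` is pinned down from both sides; write `m = k - 1 - ℓ`. A progression
inside `G` arises if `A 1 > 2^(k-1)` (ratio `2` in `(1/A 1, 1]`), if `A 2 < 2^k` (`1/A 2` followed
by ratio-`2` terms in `(1/A 1, 1]`), and if `A 3 > 2^k 3^m`: the ratio-`3` progression from
`1/(2^k 3^m)` runs through `(1/A 3, 1/A 2]` up to its `m`-th term and then, as `3 > 2` and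
`3^ℓ ≤ 2^k`, jumps over the gap `(1/2^k, 1/2^(k-1)]` into `(1/2^(k-1), 1]`.
Conversely the bad points `1/A 1`, `1/2^k` (if `A 2 > 2^k`) and `1/A 3` have ratios `r` with
`x r^(k-1) ≤ 1`. This excludes every `r ≥ 2` for `1/A 1`, and every `r ≥ 3` for `1/2^k` since
`2^k < 3^(k-1)`; from `1/A 3` a ratio `r ≥ 3` drops its `m`-th term into the gap because
`3^ℓ > 2^(k-1)`, and the ratio `2` can never cross the gap.
-/

lemma mul_pow_mem_Ioc {x r a b : ℝ} {i j n : ℕ} (hx : 0 ≤ x) (hr : 1 ≤ r)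
    (ha : a < x * r ^ i) (hb : x * r ^ n ≤ b) (hij : i ≤ j) (hjn : j ≤ n) :
    x * r ^ j ∈ Set.Ioc a b :=
  ⟨ha.trans_le (mul_le_mul_of_nonneg_left (pow_le_pow_right₀ hr hij) hx),
    (mul_le_mul_of_nonneg_left (pow_le_pow_right₀ hr hjn) hx).trans hb⟩

lemma mul_pow_le_of_forall_notMem_Ioc {G : Set ℝ} {x r a b : ℝ} (hr : 0 ≤ r) (hb : r * a ≤ b)
    (hgap : ∀ y ∈ G, y ∉ Set.Ioc a b) (hx : x ≤ a) :
    ∀ n : ℕ, (∀ j, 1 ≤ j → j ≤ n → x * r ^ j ∈ G) → x * r ^ n ≤ a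
  | 0, _ => by simpa using hx
  | n + 1, hG => by
    have ih : x * r ^ n ≤ a :=
      mul_pow_le_of_forall_notMem_Ioc hr hb hgap hx n fun j hj hjn => hG j hj (by omega)
    by_contra! hlt
    refine hgap _ (hG (n + 1) (by omega) le_rfl) ⟨hlt, ?_⟩
    calc x * r ^ (n + 1) = x * r ^ n * r := by ring
      _ ≤ a * r := mul_le_mul_of_nonneg_right ih hr
      _ ≤ b := by linarith

lemma two_mul_one_div_two_pow {k : ℕ} (hk : k ≠ 0) : 2 * (1 / 2 ^ k : ℝ) = 1 / 2 ^ (k - 1) := by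
  rw [← mul_pow_sub_one hk]
  field_simp

lemma two_pow_lt_three_pow_sub_one {k : ℕ} (hk : 3 ≤ k) : 2 ^ k < 3 ^ (k - 1) := by
  obtain ⟨n, rfl⟩ : ∃ n, k = n + 3 := ⟨k - 3, by omega⟩
  have : 2 ^ n ≤ 3 ^ n := Nat.pow_le_pow_left (by norm_num) n
  have : 0 < 2 ^ n := by positivity
  rw [show n + 3 - 1 = n + 2 by omega, pow_add, pow_add]
  omega

lemma two_le_and_le_sub_two {k ℓ : ℕ} (hk : 3 ≤ k) (h1 : 2 ^ (k - 1) < 3 ^ ℓ)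
    (h2 : 3 ^ ℓ < 2 ^ k) : 2 ≤ ℓ ∧ ℓ ≤ k - 2 := by
  constructor
  · by_contra! hℓ
    have h4 : 2 ^ 2 ≤ 2 ^ (k - 1) := Nat.pow_le_pow_right (by norm_num) (by omega)
    have h3 : 3 ^ ℓ ≤ 3 ^ 1 := Nat.pow_le_pow_right (by norm_num) (by omega)
    omega
  · have := (Nat.pow_lt_pow_iff_right (by norm_num : 1 < 3)).1
      (h2.trans (two_pow_lt_three_pow_sub_one hk))
    omega

lemma three_pow_lt_two_pow {k m ℓ : ℕ} (hmℓ : m + ℓ = k - 1) (h1 : 2 ^ (k - 1) < 3 ^ ℓ) :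
    3 ^ m < 2 ^ (k - 1) := by
  refine Nat.lt_of_mul_lt_mul_right (a := 3 ^ ℓ) ?_
  calc 3 ^ m * 3 ^ ℓ = 3 ^ (k - 1) := by rw [← pow_add, hmℓ]
    _ ≤ (2 * 2) ^ (k - 1) := Nat.pow_le_pow_left (by norm_num) _
    _ = 2 ^ (k - 1) * 2 ^ (k - 1) := mul_pow _ _ _
    _ < 2 ^ (k - 1) * 3 ^ ℓ := Nat.mul_lt_mul_of_pos_left h1 (by positivity)

def layer (A : ℕ → ℕ) (n : ℕ) : Set ℝ := Set.Ioc (1 / (A (n + 1) : ℝ)) (1 / (A n : ℝ))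

def evenLayers (A : ℕ → ℕ) : Set ℝ := ⋃ i : ℕ, layer A (2 * i)

def oddLayers (A : ℕ → ℕ) : Set ℝ := ⋃ i : ℕ, layer A (2 * i + 1)

lemma layer_subset_evenLayers (A : ℕ → ℕ) (i : ℕ) : layer A (2 * i) ⊆ evenLayers A :=
  Set.subset_iUnion (fun i => layer A (2 * i)) i

structure IsGoodBadSequence (k : ℕ) (A : ℕ → ℕ) : Prop where
  strictMono : StrictMono A
  apply_zero : A 0 = 1
  good : kGood k (evenLayers A)
  bad_eq : Bad k (evenLayers A) = oddLayers A

namespace IsGoodBadSequence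

variable {k : ℕ} {A : ℕ → ℕ}

lemma one_le (h : IsGoodBadSequence k A) (n : ℕ) : 1 ≤ A n :=
  h.apply_zero ▸ h.strictMono.monotone n.zero_le

lemma cast_pos (h : IsGoodBadSequence k A) (n : ℕ) : (0 : ℝ) < A n := by
  exact_mod_cast h.one_le n

lemma one_div_mem_layer (h : IsGoodBadSequence k A) (n : ℕ) : 1 / (A n : ℝ) ∈ layer A n := by
  refine ⟨?_, le_rfl⟩
  rw [one_div_lt_one_div (h.cast_pos _) (h.cast_pos _)]
  exact_mod_cast h.strictMono n.lt_succ_self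

lemma layer_subset_Bad (h : IsGoodBadSequence k A) (i : ℕ) :
    layer A (2 * i + 1) ⊆ Bad k (evenLayers A) :=
  h.bad_eq ▸ Set.subset_iUnion (fun i => layer A (2 * i + 1)) i

lemma notMem_of_mem_layer (h : IsGoodBadSequence k A) {i : ℕ} {y : ℝ}
    (hy : y ∈ layer A (2 * i + 1)) : y ∉ evenLayers A :=
  (h.layer_subset_Bad i hy).1.2

lemma le_one_of_mem (h : IsGoodBadSequence k A) {y : ℝ} (hy : y ∈ evenLayers A) : y ≤ 1 := by
  obtain ⟨i, hi⟩ := Set.mem_iUnion.1 hy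
  refine hi.2.trans ?_
  rw [div_le_one (h.cast_pos _)]
  exact_mod_cast h.one_le _

lemma pow_le_of_forall_mem (h : IsGoodBadSequence k A) (hk : 2 ≤ k) {c : ℝ} (hc : 0 < c) {r : ℕ}
    (hr : ∀ j, 1 ≤ j → j ≤ k - 1 → 1 / c * (r : ℝ) ^ j ∈ evenLayers A) :
    (r : ℝ) ^ (k - 1) ≤ c := by
  have := h.le_one_of_mem (hr (k - 1) (by omega) le_rfl)
  rwa [one_div_mul_eq_div, div_le_one hc] at this

lemma apply_one (h : IsGoodBadSequence k A) (hk : 2 ≤ k) : A 1 = 2 ^ (k - 1) := by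
  apply le_antisymm
  · by_contra! hlt
    refine h.good ⟨1 / 2 ^ (k - 1), 2, by positivity, le_rfl, fun j hj => ?_⟩
    refine layer_subset_evenLayers A 0 (mul_pow_mem_Ioc (i := 0) (n := k - 1) (by positivity)
      (by norm_num) ?_ ?_ j.zero_le (by omega))
    · rw [pow_zero, mul_one, one_div_lt_one_div (h.cast_pos _) (by positivity)]
      exact_mod_cast hlt
    · simp [h.apply_zero]
  · obtain ⟨r, hr2, hr⟩ := (h.layer_subset_Bad 0 (h.one_div_mem_layer 1)).2
    have h2r : (2 : ℝ) ^ (k - 1) ≤ (r : ℝ) ^ (k - 1) :=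
      pow_le_pow_left₀ (by norm_num) (by exact_mod_cast hr2) _
    exact_mod_cast h2r.trans (h.pow_le_of_forall_mem hk (h.cast_pos 1) hr)

lemma notMem_of_mem_Ioc (h : IsGoodBadSequence k A) (hk : 2 ≤ k) (hA2 : 2 ^ k ≤ A 2) {y : ℝ}
    (hy : y ∈ Set.Ioc (1 / 2 ^ k) (1 / 2 ^ (k - 1))) : y ∉ evenLayers A := by
  refine h.notMem_of_mem_layer (i := 0) ⟨lt_of_le_of_lt ?_ hy.1, ?_⟩
  · rw [one_div_le_one_div (h.cast_pos _) (by positivity)]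
    exact_mod_cast hA2
  · simpa [h.apply_one hk] using hy.2

lemma apply_two_le (h : IsGoodBadSequence k A) (hk : 3 ≤ k) : A 2 ≤ 2 ^ k := by
  by_contra! hlt
  obtain ⟨r, hr2, hr⟩ : kBadWrt k (evenLayers A) (1 / 2 ^ k) := by
    refine (h.layer_subset_Bad 0 ⟨?_, ?_⟩).2
    · rw [one_div_lt_one_div (h.cast_pos _) (by positivity)]
      exact_mod_cast hlt
    · rw [mul_zero, zero_add, h.apply_one (by omega), Nat.cast_pow, Nat.cast_ofNat,
        ← two_mul_one_div_two_pow (by omega)]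
      linarith [one_div_pos.2 (pow_pos (two_pos (α := ℝ)) k)]
  have hr3 : r < 3 := by
    have := h.pow_le_of_forall_mem (by omega) (by positivity) hr
    have h23 : (2 : ℝ) ^ k < 3 ^ (k - 1) := by exact_mod_cast two_pow_lt_three_pow_sub_one hk
    exact_mod_cast lt_of_pow_lt_pow_left₀ (k - 1) (by norm_num) (this.trans_lt h23)
  obtain rfl : r = 2 := by omega
  have hgap := mul_pow_le_of_forall_notMem_Ioc (G := evenLayers A) (r := 2)
    (b := 1 / 2 ^ (k - 1)) zero_le_two (two_mul_one_div_two_pow (by omega)).le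
    (fun y hy hy' => h.notMem_of_mem_Ioc (by omega) hlt.le hy' hy) le_rfl (k - 1)
    (by exact_mod_cast hr)
  exact ((mul_le_iff_le_one_right (by positivity)).1 hgap).not_gt
    (one_lt_pow₀ one_lt_two (by omega))

lemma le_apply_two (h : IsGoodBadSequence k A) (hk : 2 ≤ k) : 2 ^ k ≤ A 2 := by
  have hA1 : (A 1 : ℝ) = 2 ^ (k - 1) := by exact_mod_cast h.apply_one hk
  by_contra! hlt
  refine h.good ⟨1 / A 2, 2, one_div_pos.2 (h.cast_pos 2), le_rfl, fun j hj => ?_⟩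
  rcases j.eq_zero_or_pos with rfl | hj0
  · simpa using layer_subset_evenLayers A 1 (h.one_div_mem_layer 2)
  refine layer_subset_evenLayers A 0 (mul_pow_mem_Ioc (i := 1) (n := k - 1) (by positivity)
    (by norm_num) ?_ ?_ hj0 (by omega))
  · have : (A 2 : ℝ) < 2 * 2 ^ (k - 1) := by
      rw [mul_pow_sub_one (by omega)]
      exact_mod_cast hlt
    rw [mul_zero, zero_add, hA1, one_div_mul_eq_div, pow_one,
      div_lt_div_iff₀ (by positivity) (h.cast_pos 2)]
    push_cast
    linarith
  · have : (A 1 : ℝ) < A 2 := by exact_mod_cast h.strictMono one_lt_two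
    rw [mul_zero, h.apply_zero, Nat.cast_one, Nat.cast_ofNat, ← hA1, one_div_mul_eq_div,
      div_le_div_iff₀ (h.cast_pos 2) one_pos]
    linarith

lemma apply_two (h : IsGoodBadSequence k A) (hk : 3 ≤ k) : A 2 = 2 ^ k :=
  le_antisymm (h.apply_two_le hk) (h.le_apply_two (by omega))

lemma apply_three_le (h : IsGoodBadSequence k A) (hk : 3 ≤ k) {m ℓ : ℕ} (hmℓ : m + ℓ = k - 1)
    (h2 : 3 ^ ℓ ≤ 2 ^ k) : A 3 ≤ 2 ^ k * 3 ^ m := by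
  have hN : (1 : ℝ) / (2 ^ k * 3 ^ m) * 3 ^ m = 1 / 2 ^ k := by field_simp
  by_contra! hlt
  refine h.good ⟨1 / (2 ^ k * 3 ^ m), 3, by positivity, by norm_num, fun j hj => ?_⟩
  rw [Nat.cast_ofNat]
  rcases le_or_gt j m with hjm | hjm
  · refine layer_subset_evenLayers A 1 (mul_pow_mem_Ioc (i := 0) (n := m) (by positivity)
      (by norm_num) ?_ ?_ j.zero_le hjm)
    · rw [pow_zero, mul_one (_ / _), one_div_lt_one_div (h.cast_pos _) (by positivity)]
      exact_mod_cast hlt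
    · rw [hN, show 2 * 1 = 2 from rfl, h.apply_two hk, Nat.cast_pow, Nat.cast_ofNat]
  · refine layer_subset_evenLayers A 0 (mul_pow_mem_Ioc (i := m + 1) (n := k - 1) (by positivity)
      (by norm_num) ?_ ?_ hjm (by omega))
    · rw [mul_zero, zero_add, h.apply_one (by omega), pow_succ, ← mul_assoc, hN,
        Nat.cast_pow, Nat.cast_ofNat, ← mul_pow_sub_one (by omega : k ≠ 0)]
      field_simp
      norm_num
    · rw [mul_zero, h.apply_zero, Nat.cast_one, div_one, ← hmℓ, pow_add, ← mul_assoc, hN,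
        one_div_mul_eq_div, div_le_one (by positivity)]
      exact_mod_cast h2

lemma le_apply_three (h : IsGoodBadSequence k A) (hk : 3 ≤ k) {m ℓ : ℕ} (hm : 1 ≤ m)
    (hmℓ : m + ℓ = k - 1) (h1 : 2 ^ (k - 1) < 3 ^ ℓ) : 2 ^ k * 3 ^ m ≤ A 3 := by
  have hA2 : (A 2 : ℝ) = 2 ^ k := by exact_mod_cast h.apply_two hk
  by_contra! hlt
  have hlt : (A 3 : ℝ) < 2 ^ k * 3 ^ m := by exact_mod_cast hlt
  obtain ⟨r, hr2, hr⟩ := (h.layer_subset_Bad 1 (h.one_div_mem_layer 3)).2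
  rcases hr2.eq_or_lt with rfl | hr3
  · have hx : 1 / (A 3 : ℝ) ≤ 1 / 2 ^ k := by
      rw [one_div_le_one_div (h.cast_pos 3) (by positivity), ← hA2]
      exact_mod_cast (h.strictMono (by norm_num : 2 < 3)).le
    have hgap := mul_pow_le_of_forall_notMem_Ioc (G := evenLayers A) (r := 2)
      (b := 1 / 2 ^ (k - 1)) zero_le_two (two_mul_one_div_two_pow (by omega)).le
      (fun y hy hy' => h.notMem_of_mem_Ioc (by omega) (h.apply_two hk).ge hy' hy) hx (k - 1)
      (by exact_mod_cast hr)
    rw [one_div_mul_eq_div, div_le_div_iff₀ (h.cast_pos 3) (by positivity), one_mul] at hgap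
    have h3m : (3 : ℝ) ^ m < 2 ^ (k - 1) := by exact_mod_cast three_pow_lt_two_pow hmℓ h1
    nlinarith [pow_pos (two_pos (α := ℝ)) k]
  · have hr3 : (3 : ℝ) ≤ r := by exact_mod_cast hr3
    refine h.notMem_of_mem_Ioc (by omega) (h.apply_two hk).ge ⟨?_, ?_⟩ (hr m hm (by omega))
    · calc 1 / (2 : ℝ) ^ k = 1 / (2 ^ k * 3 ^ m) * 3 ^ m := by field_simp
        _ < 1 / A 3 * 3 ^ m := by gcongr; exact h.cast_pos 3
        _ ≤ 1 / A 3 * r ^ m := by gcongr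
    · have h2r : (2 : ℝ) ^ (k - 1) < r ^ ℓ :=
        (show (2 : ℝ) ^ (k - 1) < 3 ^ ℓ by exact_mod_cast h1).trans_le (by gcongr)
      have hprod : 1 / (A 3 : ℝ) * r ^ m * r ^ ℓ ≤ 1 := by
        rw [mul_assoc, ← pow_add, hmℓ, one_div_mul_eq_div, div_le_one (h.cast_pos 3)]
        exact h.pow_le_of_forall_mem (by omega) (h.cast_pos 3) hr
      rw [le_div_iff₀ (by positivity)]
      calc 1 / (A 3 : ℝ) * r ^ m * 2 ^ (k - 1) ≤ 1 / A 3 * r ^ m * r ^ ℓ := by gcongr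
        _ ≤ 1 := hprod

end IsGoodBadSequence

theorem stmt_15_general (k : ℕ) (hk : 3 ≤ k) (ℓ : ℕ)
    (h1 : 2 ^ (k - 1) < 3 ^ ℓ) (h2 : 3 ^ ℓ < 2 ^ k)
    (A : ℕ → ℕ)
    (hmono : StrictMono A) (hA1 : A 0 = 1)
    (hgood : kGood k (⋃ i : ℕ, Set.Ioc (1 / (A (2 * i + 1) : ℝ)) (1 / (A (2 * i) : ℝ))))
    (hbad : Bad k (⋃ i : ℕ, Set.Ioc (1 / (A (2 * i + 1) : ℝ)) (1 / (A (2 * i) : ℝ))) =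
      ⋃ i : ℕ, Set.Ioc (1 / (A (2 * i + 2) : ℝ)) (1 / (A (2 * i + 1) : ℝ))) :
    2 ≤ ℓ ∧ ℓ ≤ k - 2 ∧ A 3 = 2 ^ k * 3 ^ (k - 1 - ℓ) := by
  obtain ⟨hℓ2, hℓk⟩ := two_le_and_le_sub_two hk h1 h2
  have h : IsGoodBadSequence k A := ⟨hmono, hA1, hgood, hbad⟩
  have hmℓ : k - 1 - ℓ + ℓ = k - 1 := by omega
  exact ⟨hℓ2, hℓk, le_antisymm (h.apply_three_le hk hmℓ h2.le)
    (h.le_apply_three hk (by omega) hmℓ h1)⟩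

/-- Here `A i` denotes the term `A_{i+1}` of the paper. -/
theorem stmt_15 (k : ℕ) (hk : 3 ≤ k) (ℓ : ℕ) (hℓ : 0 < ℓ)
    (h1 : 2 ^ (k - 1) < 3 ^ ℓ) (h2 : 3 ^ ℓ < 2 ^ k)
    (A : ℕ → ℕ)
    (hpos : ∀ i, 0 < A i) (hmono : StrictMono A) (hA1 : A 0 = 1)
    (hgood : kGood k (⋃ i : ℕ, Set.Ioc (1 / (A (2 * i + 1) : ℝ)) (1 / (A (2 * i) : ℝ))))
    (hbad : Bad k (⋃ i : ℕ, Set.Ioc (1 / (A (2 * i + 1) : ℝ)) (1 / (A (2 * i) : ℝ))) =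
      ⋃ i : ℕ, Set.Ioc (1 / (A (2 * i + 2) : ℝ)) (1 / (A (2 * i + 1) : ℝ))) :
    2 ≤ ℓ ∧ ℓ ≤ k - 2 ∧ A 3 = 2 ^ k * 3 ^ (k - 1 - ℓ) :=
  stmt_15_general k hk ℓ h1 h2 A hmono hA1 hgood hbad
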